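/- Probability that λ̂_k falls below the threshold (Lemma A.2, part 2): Let (X,W) ∈ 𝓕⁸_{η,τ}, α > 0, ν ≥ 0, and set I₁ := {k ∈ ℤ : λ_k ≥ 4·τ·α·γ_k^ν}. Then there exists a universal constant C > 0 such that sup_{k∈I₁} P(λ̂_k < α·γ_k^ν) ≤ (C·η/(α·n))·E‖X‖²·(1 + E‖W‖²/(α·n)). -/

import Mathlib

open MeasureTheory Complex Filter Real Set ProbabilityTheory
open scoped ENNReal NNReal Topology ComplexConjugate Classical

noncomputable section

namespace FLIR

instance : Fact ((0:ℝ) < 1) := ⟨one_pos⟩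

/-- `H = L²([0,1],ℂ)`, realized as the `L²` space of the circle of circumference `1`
with its normalized Haar (Lebesgue) measure. -/
abbrev H : Type := Lp ℂ 2 (@AddCircle.haarAddCircle 1 _)

instance : MeasurableSpace H := borel H
instance : BorelSpace H := ⟨rfl⟩

/-- The Fourier coefficient `⟨f, φ_k⟩ = ∫₀¹ f(t) e^{-2πikt} dt`. -/
def coef (f : H) (k : ℤ) : ℂ := fourierBasis.repr f k

/-- Sobolev weights `γ_k = 1 + |2πk|²`. -/
def γw (k : ℤ) : ℝ := 1 + (2 * Real.pi * (k : ℝ)) ^ 2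

/-- Squared Sobolev norm `‖f‖_ν² = ∑_k γ_k^ν |⟨f,φ_k⟩|²` (with value in `[0,∞]`). -/
def sobSq (ν : ℝ) (f : H) : ℝ≥0∞ := ∑' k : ℤ, ENNReal.ofReal (γw k ^ ν * ‖coef f k‖ ^ 2)

/-- Squared Sobolev distance between a coefficient sequence `b` and `f`. -/
def sobDiff (ν : ℝ) (b : ℤ → ℂ) (f : H) : ℝ≥0∞ :=
  ∑' k : ℤ, ENNReal.ofReal (γw k ^ ν * ‖b k - coef f k‖ ^ 2)

variable {Ω : Type} [MeasurableSpace Ω]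

/-- `x_k = E|⟨X,φ_k⟩|²`. -/
def xPop (μ : Measure Ω) (X : Ω → H) (k : ℤ) : ℝ := ∫ ω, ‖coef (X ω) k‖ ^ 2 ∂μ

/-- `w_k = E|⟨W,φ_k⟩|²`. -/
def wPop (μ : Measure Ω) (W : Ω → H) (k : ℤ) : ℝ := ∫ ω, ‖coef (W ω) k‖ ^ 2 ∂μ

/-- `c_k = E[⟨φ_k,X⟩ ⟨W,φ_k⟩]`. -/
def cPop (μ : Measure Ω) (X W : Ω → H) (k : ℤ) : ℂ :=
  ∫ ω, conj (coef (X ω) k) * coef (W ω) k ∂μ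

/-- `λ_k = |c_k|²/w_k`. -/
def lamPop (μ : Measure Ω) (X W : Ω → H) (k : ℤ) : ℝ :=
  ‖cPop μ X W k‖ ^ 2 / wPop μ W k

/-- `λ₊ = max(1, sup_k λ_k)`. -/
def lamPlus (μ : Measure Ω) (X W : Ω → H) : ℝ := max 1 (⨆ k : ℤ, lamPop μ X W k)

/-- `E‖X‖²`. -/
def EnormSq (μ : Measure Ω) (X : Ω → H) : ℝ := ∫ ω, ‖X ω‖ ^ 2 ∂μ

/-- The moment class `𝓕^m_{η,τ}`. -/
def memF (μ : Measure Ω) (X W : Ω → H) (m : ℕ) (η τ : ℝ) : Prop :=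
  1 ≤ η ∧ 1 ≤ τ ∧
  (∀ k : ℤ, ∫⁻ ω, ENNReal.ofReal (‖coef (X ω) k‖ ^ m) ∂μ
      ≤ ENNReal.ofReal (η * xPop μ X k ^ ((m : ℝ) / 2))) ∧
  (∀ k : ℤ, ∫⁻ ω, ENNReal.ofReal (‖coef (W ω) k‖ ^ m) ∂μ
      ≤ ENNReal.ofReal (η * wPop μ W k ^ ((m : ℝ) / 2))) ∧
  (∀ k : ℤ, lamPop μ X W k / wPop μ W k ≤ τ)

/-- The error class `𝓔^m_η`: centered, unit variance, `m`-th moment bounded by `η`. -/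
def memE (μ : Measure Ω) (U : Ω → ℝ) (m : ℕ) (η : ℝ) : Prop :=
  Measurable U ∧ Integrable U μ ∧ Integrable (fun ω => (U ω) ^ 2) μ ∧
  (∫ ω, U ω ∂μ) = 0 ∧ (∫ ω, (U ω) ^ 2 ∂μ) = 1 ∧
  ∫⁻ ω, ENNReal.ofReal (|U ω| ^ m) ∂μ ≤ ENNReal.ofReal η

/-- The link condition `(λ_k) ∈ 𝒮_{κ,d}`. -/
def memS (μ : Measure Ω) (X W : Ω → H) (κ : ℝ → ℝ) (d ν p : ℝ) : Prop :=
  ∀ k : ℤ,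
    κ (lamPop μ X W k / (d * γw k ^ ν * lamPlus μ X W)) ≤ γw k ^ (ν - p) ∧
    γw k ^ (ν - p) ≤ κ (d * lamPop μ X W k / (γw k ^ ν * lamPlus μ X W))

/-- An index function: continuous, strictly increasing, positive, vanishing at `0⁺`. -/
def IndexFun (κ : ℝ → ℝ) : Prop :=
  StrictMonoOn κ (Set.Ioi 0) ∧ ContinuousOn κ (Set.Ioi 0) ∧
  (∀ t : ℝ, 0 < t → 0 < κ t) ∧
  Filter.Tendsto κ (nhdsWithin 0 (Set.Ioi 0)) (nhds 0)

/-- Structural assumptions of the model: measurability, second moments, centeredness,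
the regression equation `Y = ∫ βX + σU`, exogeneity of `W`, joint second order
stationarity (in the form of uncorrelated distinct Fourier coefficients) and
nondegeneracy `c_k ≠ 0`. -/
def Model (μ : Measure Ω) (Y : Ω → ℝ) (X W : Ω → H) (U : Ω → ℝ) (β : H) (σ : ℝ) : Prop :=
  Measurable Y ∧ Measurable X ∧ Measurable W ∧ Measurable U ∧
  Integrable (fun ω => ‖X ω‖ ^ 2) μ ∧ Integrable (fun ω => ‖W ω‖ ^ 2) μ ∧
  (∫ ω, X ω ∂μ) = 0 ∧ (∫ ω, W ω ∂μ) = 0 ∧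
  (∀ᵐ ω ∂μ, (Y ω : ℂ) =
      (∫ t : AddCircle (1:ℝ), β t * (X ω) t ∂(@AddCircle.haarAddCircle 1 _)) + σ * U ω) ∧
  (∀ k : ℤ, (∫ ω, (U ω : ℂ) * coef (W ω) k ∂μ) = 0) ∧
  (∀ j k : ℤ, j ≠ k → (∫ ω, conj (coef (X ω) j) * coef (W ω) k ∂μ) = 0) ∧
  (∀ k : ℤ, cPop μ X W k ≠ 0)

/-- Structural assumptions on the pair `(X,W)` alone. -/
def PairModel (μ : Measure Ω) (X W : Ω → H) : Prop :=
  Measurable X ∧ Measurable W ∧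
  Integrable (fun ω => ‖X ω‖ ^ 2) μ ∧ Integrable (fun ω => ‖W ω‖ ^ 2) μ ∧
  (∫ ω, X ω ∂μ) = 0 ∧ (∫ ω, W ω ∂μ) = 0 ∧
  (∀ j k : ℤ, j ≠ k → (∫ ω, conj (coef (X ω) j) * coef (W ω) k ∂μ) = 0) ∧
  (∀ k : ℤ, cPop μ X W k ≠ 0)

/-- The sample `(Y_i,X_i,W_i)` is i.i.d. with common distribution that of `(Y₀,X₀,W₀)`. -/
def IIDSample (μ : Measure Ω) (n : ℕ) (Y : Fin n → Ω → ℝ) (X W : Fin n → Ω → H)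
    (Y0 : Ω → ℝ) (X0 W0 : Ω → H) : Prop :=
  (∀ i, Measurable (Y i)) ∧ (∀ i, Measurable (X i)) ∧ (∀ i, Measurable (W i)) ∧
  iIndepFun (fun i ω => (Y i ω, X i ω, W i ω)) μ ∧
  (∀ i, Measure.map (fun ω => (Y i ω, X i ω, W i ω)) μ
      = Measure.map (fun ω => (Y0 ω, X0 ω, W0 ω)) μ)

/-- The sample `(X_i,W_i)` is i.i.d. with common distribution that of `(X₀,W₀)`. -/
def IIDSampleXW (μ : Measure Ω) (n : ℕ) (X W : Fin n → Ω → H) (X0 W0 : Ω → H) : Prop :=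
  (∀ i, Measurable (X i)) ∧ (∀ i, Measurable (W i)) ∧
  iIndepFun (fun i ω => (X i ω, W i ω)) μ ∧
  (∀ i, Measure.map (fun ω => (X i ω, W i ω)) μ = Measure.map (fun ω => (X0 ω, W0 ω)) μ)

/-- `ĉ_k = n⁻¹ ∑ᵢ ⟨φ_k,X_i⟩⟨W_i,φ_k⟩`. -/
def cHat (n : ℕ) (X W : Fin n → Ω → H) (k : ℤ) (ω : Ω) : ℂ :=
  (n : ℂ)⁻¹ * ∑ i, conj (coef (X i ω) k) * coef (W i ω) k

/-- `ŵ_k = n⁻¹ ∑ᵢ |⟨W_i,φ_k⟩|²`. -/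
def wHat (n : ℕ) (W : Fin n → Ω → H) (k : ℤ) (ω : Ω) : ℝ :=
  (n : ℝ)⁻¹ * ∑ i, ‖coef (W i ω) k‖ ^ 2

/-- `λ̂_k = (|ĉ_k|²/ŵ_k)·1{ŵ_k ≥ α}`. -/
def lamHat (α : ℝ) (n : ℕ) (X W : Fin n → Ω → H) (k : ℤ) (ω : Ω) : ℝ :=
  if α ≤ wHat n W k ω then ‖cHat n X W k ω‖ ^ 2 / wHat n W k ω else 0

/-- `ĝ_k = (conj ĉ_k / ŵ_k)·1{ŵ_k ≥ α}· n⁻¹ ∑ᵢ Y_i ⟨W_i,φ_k⟩`. -/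
def gHat (α : ℝ) (n : ℕ) (Y : Fin n → Ω → ℝ) (X W : Fin n → Ω → H) (k : ℤ) (ω : Ω) : ℂ :=
  (if α ≤ wHat n W k ω then conj (cHat n X W k ω) / (wHat n W k ω : ℂ) else 0) *
    ((n : ℂ)⁻¹ * ∑ i, (Y i ω : ℂ) * coef (W i ω) k)

/-- Fourier coefficients of the estimator `β̂_ν`. -/
def bHat (ν α : ℝ) (n : ℕ) (Y : Fin n → Ω → ℝ) (X W : Fin n → Ω → H) (k : ℤ) (ω : Ω) : ℂ :=
  if α * γw k ^ ν ≤ lamHat α n X W k ω then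
    gHat α n Y X W k ω / (lamHat α n X W k ω : ℂ) else 0

/-- The residual process `T_{n,k} = n⁻¹ ∑ᵢ Y_i ⟨W_i,φ_k⟩ − β_k ĉ_k`. -/
def Tnk (n : ℕ) (Y : Fin n → Ω → ℝ) (X W : Fin n → Ω → H) (β : H) (k : ℤ) (ω : Ω) : ℂ :=
  (n : ℂ)⁻¹ * ∑ i, (Y i ω : ℂ) * coef (W i ω) k - coef β k * cHat n X W k ω

/-- The `𝒲_ν`-risk `E‖β̂_ν − β‖_ν²` of the estimator. -/
def risk (μ : Measure Ω) (ν α : ℝ) (n : ℕ) (Y : Fin n → Ω → ℝ) (X W : Fin n → Ω → H)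
    (β : H) : ℝ≥0∞ :=
  ∫⁻ ω, sobDiff ν (fun k => bHat ν α n Y X W k ω) β ∂μ

/-!
On the event `λ̂_k < αγ_k^ν` either `|ŵ_k - w_k| ≥ 3w_k/4` or `|ĉ_k - c_k| ≥ |c_k|/4`: the
assumptions `λ_k ≥ 4τα γ_k^ν` and `λ_k ≤ τ w_k` give `w_k ≥ 4αγ_k^ν` and
`|c_k|² ≥ 4αγ_k^ν w_k`, so otherwise `ŵ_k > w_k/4` clears the threshold `α` and
`|ĉ_k|²/ŵ_k > (9/28)|c_k|²/w_k > αγ_k^ν`. Chebyshev's inequality for the i.i.d. sample means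
bounds the two probabilities by `16η/(9n)` and `128 η x_k w_k/(n|c_k|²) ≤ 32 η x_k/(αn)`, where
the fourth moments involved come from the eighth-moment bounds of `𝓕⁸` by Cauchy–Schwarz.
Cauchy–Schwarz also gives `4α ≤ λ_k ≤ x_k`, which absorbs the first term, and `x_k ≤ E‖X‖²`.
-/

lemma coef_eq_inner (f : H) (k : ℤ) : coef f k = inner ℂ (fourierBasis k) f :=
  fourierBasis.repr_apply_apply f k

@[fun_prop]
lemma continuous_coef (k : ℤ) : Continuous fun f : H => coef f k := by
  simp only [coef_eq_inner]
  fun_prop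

lemma norm_coef_le (f : H) (k : ℤ) : ‖coef f k‖ ≤ ‖f‖ := by
  have := norm_inner_le_norm (𝕜 := ℂ) (fourierBasis k) f
  rwa [fourierBasis.orthonormal.1 k, one_mul, ← coef_eq_inner] at this

lemma one_le_γw (k : ℤ) : 1 ≤ γw k := le_add_of_nonneg_right (sq_nonneg _)

theorem lintegral_ofReal_mul_le {μ : Measure Ω} {p q : Ω → ℝ} (hp : Measurable p)
    {η A B : ℝ} (hη : 0 ≤ η) (hA : 0 < A) (hB : 0 < B)
    (hp2 : ∫⁻ ω, ENNReal.ofReal (p ω ^ 2) ∂μ ≤ ENNReal.ofReal (η * A ^ 2))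
    (hq2 : ∫⁻ ω, ENNReal.ofReal (q ω ^ 2) ∂μ ≤ ENNReal.ofReal (η * B ^ 2)) :
    ∫⁻ ω, ENNReal.ofReal (p ω * q ω) ∂μ ≤ ENNReal.ofReal (η * A * B) := by
  have amgm : ∀ ω, p ω * q ω ≤ B / (2 * A) * p ω ^ 2 + A / (2 * B) * q ω ^ 2 := fun ω => by
    have e : B / (2 * A) * p ω ^ 2 + A / (2 * B) * q ω ^ 2 - p ω * q ω
        = (B * p ω - A * q ω) ^ 2 / (2 * A * B) := by
      field_simp; ring
    linarith [show 0 ≤ (B * p ω - A * q ω) ^ 2 / (2 * A * B) by positivity]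
  calc ∫⁻ ω, ENNReal.ofReal (p ω * q ω) ∂μ
      ≤ ∫⁻ ω, (ENNReal.ofReal (B / (2 * A)) * ENNReal.ofReal (p ω ^ 2)
          + ENNReal.ofReal (A / (2 * B)) * ENNReal.ofReal (q ω ^ 2)) ∂μ := by
        refine lintegral_mono fun ω => ?_
        rw [← ENNReal.ofReal_mul (by positivity), ← ENNReal.ofReal_mul (by positivity),
          ← ENNReal.ofReal_add (by positivity) (by positivity)]
        exact ENNReal.ofReal_le_ofReal (amgm ω)
    _ = ENNReal.ofReal (B / (2 * A)) * ∫⁻ ω, ENNReal.ofReal (p ω ^ 2) ∂μ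
          + ENNReal.ofReal (A / (2 * B)) * ∫⁻ ω, ENNReal.ofReal (q ω ^ 2) ∂μ := by
        rw [lintegral_add_left (by fun_prop), lintegral_const_mul' _ _ ENNReal.ofReal_ne_top,
          lintegral_const_mul' _ _ ENNReal.ofReal_ne_top]
    _ ≤ ENNReal.ofReal (B / (2 * A)) * ENNReal.ofReal (η * A ^ 2)
          + ENNReal.ofReal (A / (2 * B)) * ENNReal.ofReal (η * B ^ 2) := by gcongr
    _ = ENNReal.ofReal (η * A * B) := by
        rw [← ENNReal.ofReal_mul (by positivity), ← ENNReal.ofReal_mul (by positivity),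
          ← ENNReal.ofReal_add (by positivity) (by positivity)]
        congr 1
        field_simp
        ring

theorem lintegral_ofReal_pow_four_le {μ : Measure Ω} [IsProbabilityMeasure μ] {p : Ω → ℝ}
    (hp : Measurable p) {η A : ℝ} (hη : 1 ≤ η) (hA : 0 < A)
    (h8 : ∫⁻ ω, ENNReal.ofReal (p ω ^ 8) ∂μ ≤ ENNReal.ofReal (η * A ^ 4)) :
    ∫⁻ ω, ENNReal.ofReal (p ω ^ 4) ∂μ ≤ ENNReal.ofReal (η * A ^ 2) := by
  have h1 : ∫⁻ _ : Ω, ENNReal.ofReal (1 ^ 2) ∂μ ≤ ENNReal.ofReal (η * 1 ^ 2) := by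
    simpa using hη
  simpa using lintegral_ofReal_mul_le (hp.pow_const 4) (by linarith) (by positivity) one_pos
    (by simpa only [← pow_mul] using h8) h1

theorem memLp_two_of_lintegral_sq_le {μ : Measure Ω} {E : Type*} [NormedAddCommGroup E]
    {Y : Ω → E} (hY : AEStronglyMeasurable Y μ) {M : ℝ}
    (h : ∫⁻ ω, ENNReal.ofReal (‖Y ω‖ ^ 2) ∂μ ≤ ENNReal.ofReal M) : MemLp Y 2 μ := by
  rw [memLp_two_iff_integrable_sq_norm hY]
  refine ⟨hY.norm.pow 2, (hasFiniteIntegral_iff_ofReal (ae_of_all _ fun ω => by positivity)).2 ?_⟩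
  exact h.trans_lt ENNReal.ofReal_lt_top

theorem integral_sq_le_of_lintegral_sq_le {μ : Measure Ω} {Y : Ω → ℝ}
    (hY : AEStronglyMeasurable Y μ) {M : ℝ} (hM : 0 ≤ M)
    (h : ∫⁻ ω, ENNReal.ofReal (Y ω ^ 2) ∂μ ≤ ENNReal.ofReal M) : ∫ ω, Y ω ^ 2 ∂μ ≤ M := by
  rw [integral_eq_lintegral_of_nonneg_ae (f := fun ω => Y ω ^ 2)
    (ae_of_all _ fun ω => by positivity) (hY.pow 2)]
  exact ENNReal.toReal_le_of_le_ofReal hM h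

section SampleMean

variable {β ι : Type*} [MeasurableSpace β] [Fintype ι] {μ : Measure Ω} [IsProbabilityMeasure μ]
  {P : ι → Ω → β} {P0 : Ω → β}

theorem measure_le_abs_sampleMean_sub_le [Nonempty ι] (hind : iIndepFun P μ)
    (hid : ∀ i, IdentDistrib (P i) P0 μ μ) {f : β → ℝ} (hf : Measurable f) {M : ℝ} (hM0 : 0 ≤ M)
    (hM : ∫⁻ ω, ENNReal.ofReal (f (P0 ω) ^ 2) ∂μ ≤ ENNReal.ofReal M) {t : ℝ} (ht : 0 < t) :
    μ {ω | t ≤ |(Fintype.card ι : ℝ)⁻¹ * ∑ i, f (P i ω) - ∫ ω, f (P0 ω) ∂μ|}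
      ≤ ENNReal.ofReal (M / (Fintype.card ι * t ^ 2)) := by
  set n : ℝ := (Fintype.card ι : ℝ)
  have hn : 0 < n := Nat.cast_pos.2 Fintype.card_pos
  have hidf : ∀ i, IdentDistrib (f ∘ P i) (f ∘ P0) μ μ := fun i => (hid i).comp hf
  have hP0 : AEStronglyMeasurable (f ∘ P0) μ :=
    (hf.comp_aemeasurable (hid (Classical.arbitrary ι)).aemeasurable_snd).aestronglyMeasurable
  have hL2 : MemLp (f ∘ P0) 2 μ :=
    memLp_two_of_lintegral_sq_le hP0
      (by simpa only [Real.norm_eq_abs, sq_abs, Function.comp_apply] using hM)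
  have hL2i : ∀ i, MemLp (f ∘ P i) 2 μ := fun i => (hidf i).symm.memLp_snd hL2
  set S := ∑ i, f ∘ P i with hS
  have hmean : μ[S] = n * ∫ ω, f (P0 ω) ∂μ := by
    simp only [hS, Finset.sum_apply]
    rw [integral_finsetSum _ fun i _ => (hL2i i).integrable one_le_two]
    have hint : ∀ i, ∫ ω, f (P i ω) ∂μ = ∫ ω, f (P0 ω) ∂μ := fun i => (hidf i).integral_eq
    simp [hint, n]
  have hvar : Var[S; μ] = n * Var[f ∘ P0; μ] := by
    rw [hS, IndepFun.variance_sum (fun i _ => hL2i i)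
      fun i _ j _ hij => (hind.comp (fun _ => f) fun _ => hf).indepFun hij]
    simp [(hidf _).variance_eq, n]
  have hvarM : Var[f ∘ P0; μ] ≤ M :=
    (variance_le_expectation_sq hP0).trans (integral_sq_le_of_lintegral_sq_le hP0 hM0 hM)
  have hsub : {ω | t ≤ |n⁻¹ * ∑ i, f (P i ω) - ∫ ω, f (P0 ω) ∂μ|}
      ⊆ {ω | n * t ≤ |S ω - μ[S]|} := by
    intro ω hω
    have : S ω - μ[S] = n * (n⁻¹ * ∑ i, f (P i ω) - ∫ ω, f (P0 ω) ∂μ) := by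
      rw [hmean, hS, Finset.sum_apply]
      field_simp
      rfl
    simp only [Set.mem_ofPred_eq, this, abs_mul, abs_of_pos hn] at hω ⊢
    gcongr
  calc μ {ω | t ≤ |n⁻¹ * ∑ i, f (P i ω) - ∫ ω, f (P0 ω) ∂μ|}
      ≤ μ {ω | n * t ≤ |S ω - μ[S]|} := measure_mono hsub
    _ ≤ ENNReal.ofReal (Var[S; μ] / (n * t) ^ 2) :=
        meas_ge_le_variance_div_sq (memLp_finsetSum' _ fun i _ => hL2i i) (by positivity)
    _ = ENNReal.ofReal (Var[f ∘ P0; μ] / (n * t ^ 2)) := by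
        rw [hvar]
        congr 1
        field_simp
    _ ≤ ENNReal.ofReal (M / (n * t ^ 2)) := by gcongr

theorem measure_le_norm_sampleMean_sub_le [Nonempty ι] (hind : iIndepFun P μ)
    (hid : ∀ i, IdentDistrib (P i) P0 μ μ) {g : β → ℂ} (hg : Measurable g) {M : ℝ}
    (hM0 : 0 ≤ M) (hM : ∫⁻ ω, ENNReal.ofReal (‖g (P0 ω)‖ ^ 2) ∂μ ≤ ENNReal.ofReal M)
    {t : ℝ} (ht : 0 < t) :
    μ {ω | t ≤ ‖(Fintype.card ι : ℂ)⁻¹ * ∑ i, g (P i ω) - ∫ ω, g (P0 ω) ∂μ‖}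
      ≤ ENNReal.ofReal (8 * M / (Fintype.card ι * t ^ 2)) := by
  set D : Ω → ℂ := fun ω => (Fintype.card ι : ℂ)⁻¹ * ∑ i, g (P i ω) - ∫ ω, g (P0 ω) ∂μ
  have hint : Integrable (fun ω => g (P0 ω)) μ :=
    (memLp_two_of_lintegral_sq_le (hg.comp_aemeasurable
      (hid (Classical.arbitrary ι)).aemeasurable_snd).aestronglyMeasurable hM).integrable one_le_two
  have hproj : ∀ L : ℂ →L[ℝ] ℝ, (∀ z, |L z| ≤ ‖z‖) →
      μ {ω | t / 2 ≤ |L (D ω)|} ≤ ENNReal.ofReal (4 * M / (Fintype.card ι * t ^ 2)) := by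
    intro L hL
    have hLM : ∫⁻ ω, ENNReal.ofReal (L (g (P0 ω)) ^ 2) ∂μ ≤ ENNReal.ofReal M := by
      refine le_trans (lintegral_mono fun ω => ENNReal.ofReal_le_ofReal ?_) hM
      rw [← sq_abs]
      exact pow_le_pow_left₀ (abs_nonneg _) (hL _) 2
    have hLD : ∀ ω, L (D ω)
        = (Fintype.card ι : ℝ)⁻¹ * ∑ i, L (g (P i ω)) - ∫ ω, L (g (P0 ω)) ∂μ := fun ω => by
      rw [map_sub, L.integral_comp_comm hint, ← Complex.ofReal_natCast, ← Complex.ofReal_inv,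
        ← Complex.real_smul, map_smul, map_sum, smul_eq_mul]
    simp only [hLD]
    convert measure_le_abs_sampleMean_sub_le hind hid (f := fun b => L (g b))
      (L.measurable.comp hg) hM0 hLM (half_pos ht) using 2
    field_simp
    ring
  have hsub : {ω | t ≤ ‖D ω‖}
      ⊆ {ω | t / 2 ≤ |Complex.reCLM (D ω)|} ∪ {ω | t / 2 ≤ |Complex.imCLM (D ω)|} := by
    intro ω hω
    have := hω.trans (Complex.norm_le_abs_re_add_abs_im _)
    by_contra h
    simp only [Set.mem_union, Set.mem_ofPred_eq, not_or, not_le, Complex.reCLM_apply,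
      Complex.imCLM_apply] at h
    linarith
  calc μ {ω | t ≤ ‖D ω‖}
      ≤ μ {ω | t / 2 ≤ |Complex.reCLM (D ω)|} + μ {ω | t / 2 ≤ |Complex.imCLM (D ω)|} :=
        (measure_mono hsub).trans (measure_union_le _ _)
    _ ≤ ENNReal.ofReal (4 * M / (Fintype.card ι * t ^ 2))
          + ENNReal.ofReal (4 * M / (Fintype.card ι * t ^ 2)) :=
        add_le_add (hproj _ Complex.abs_re_le_norm) (hproj _ Complex.abs_im_le_norm)
    _ = ENNReal.ofReal (8 * M / (Fintype.card ι * t ^ 2)) := by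
        rw [← ENNReal.ofReal_add (by positivity) (by positivity)]
        ring_nf

end SampleMean

section Population

variable {μ : Measure Ω} {X W : Ω → H}

lemma integrable_norm_coef_sq (hX : Measurable X) (hX2 : Integrable (fun ω => ‖X ω‖ ^ 2) μ)
    (k : ℤ) : Integrable (fun ω => ‖coef (X ω) k‖ ^ 2) μ :=
  hX2.mono' (by fun_prop : Measurable fun ω => ‖coef (X ω) k‖ ^ 2).aestronglyMeasurable <|
    ae_of_all _ fun ω => by
      rw [Real.norm_of_nonneg (by positivity)]
      exact pow_le_pow_left₀ (norm_nonneg _) (norm_coef_le _ _) 2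

lemma xPop_le_EnormSq (hX : Measurable X) (hX2 : Integrable (fun ω => ‖X ω‖ ^ 2) μ) (k : ℤ) :
    xPop μ X k ≤ EnormSq μ X :=
  integral_mono (integrable_norm_coef_sq hX hX2 k) hX2 fun _ =>
    pow_le_pow_left₀ (norm_nonneg _) (norm_coef_le _ _) 2

lemma sq_norm_cPop_le (hX : Measurable X) (hW : Measurable W)
    (hX2 : Integrable (fun ω => ‖X ω‖ ^ 2) μ) (hW2 : Integrable (fun ω => ‖W ω‖ ^ 2) μ) (k : ℤ) :
    ‖cPop μ X W k‖ ^ 2 ≤ xPop μ X k * wPop μ W k := by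
  have hL2 : ∀ Y : Ω → H, Measurable Y → Integrable (fun ω => ‖Y ω‖ ^ 2) μ →
      MemLp (fun ω => ‖coef (Y ω) k‖) (ENNReal.ofReal 2) μ := fun Y hY hY2 => by
    rw [ENNReal.ofReal_ofNat, memLp_two_iff_integrable_sq
      (by fun_prop : Measurable fun ω => ‖coef (Y ω) k‖).aestronglyMeasurable]
    exact integrable_norm_coef_sq hY hY2 k
  have hholder := integral_mul_le_Lp_mul_Lq_of_nonneg Real.HolderConjugate.two_two
    (ae_of_all _ fun _ => norm_nonneg _) (ae_of_all _ fun _ => norm_nonneg _)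
    (hL2 X hX hX2) (hL2 W hW hW2)
  simp only [Real.rpow_two, ← Real.sqrt_eq_rpow] at hholder
  have hc : ‖cPop μ X W k‖ ≤ ∫ ω, ‖coef (X ω) k‖ * ‖coef (W ω) k‖ ∂μ :=
    (norm_integral_le_integral_norm _).trans_eq (by simp only [norm_mul, RCLike.norm_conj])
  have hx : 0 ≤ xPop μ X k := integral_nonneg fun _ => by positivity
  have hw : 0 ≤ wPop μ W k := integral_nonneg fun _ => by positivity
  calc ‖cPop μ X W k‖ ^ 2 ≤ (√(xPop μ X k) * √(wPop μ W k)) ^ 2 :=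
        pow_le_pow_left₀ (norm_nonneg _) (hc.trans hholder) 2
    _ = xPop μ X k * wPop μ W k := by
        rw [mul_pow, Real.sq_sqrt hx, Real.sq_sqrt hw]

theorem four_mul_le_wPop {τ θ : ℝ} {k : ℤ} (hτ : 0 < τ) (hθ : 0 < θ)
    (hk : 4 * τ * θ ≤ lamPop μ X W k) (hτw : lamPop μ X W k / wPop μ W k ≤ τ) :
    4 * θ ≤ wPop μ W k := by
  have hw : 0 < wPop μ W k := by
    by_contra! h
    nlinarith [hk.trans (div_nonpos_of_nonneg_of_nonpos (sq_nonneg ‖cPop μ X W k‖) h)]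
  have hτcw := (le_div_iff₀ hw).1 hk
  rw [lamPop, div_div, div_le_iff₀ (by positivity)] at hτw
  nlinarith [mul_pos hτ hw]

theorem lintegral_fourth_moments_le_of_memF [IsProbabilityMeasure μ] (hX : Measurable X)
    (hW : Measurable W) {η τ : ℝ} (hF : memF μ X W 8 η τ) {k : ℤ} (hx : 0 < xPop μ X k)
    (hw : 0 < wPop μ W k) :
    ∫⁻ ω, ENNReal.ofReal (‖coef (W ω) k‖ ^ 4) ∂μ ≤ ENNReal.ofReal (η * wPop μ W k ^ 2) ∧
    ∫⁻ ω, ENNReal.ofReal (‖coef (X ω) k‖ ^ 2 * ‖coef (W ω) k‖ ^ 2) ∂μ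
      ≤ ENNReal.ofReal (η * xPop μ X k * wPop μ W k) := by
  obtain ⟨hη, -, hX8, hW8, -⟩ := hF
  have h8 : ∀ A : ℝ, A ^ (((8 : ℕ) : ℝ) / 2) = A ^ 4 := fun A => by
    rw [show ((8 : ℕ) : ℝ) / 2 = (4 : ℕ) by norm_num, Real.rpow_natCast]
  have hX4 := lintegral_ofReal_pow_four_le (p := fun ω => ‖coef (X ω) k‖) (by fun_prop) hη hx
    (by rw [← h8]; exact hX8 k)
  have hW4 := lintegral_ofReal_pow_four_le (p := fun ω => ‖coef (W ω) k‖) (by fun_prop) hη hw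
    (by rw [← h8]; exact hW8 k)
  exact ⟨hW4, lintegral_ofReal_mul_le (p := fun ω => ‖coef (X ω) k‖ ^ 2) (by fun_prop)
    (by linarith) hx hw (by simpa only [← pow_mul] using hX4) (by simpa only [← pow_mul] using hW4)⟩

end Population

theorem le_and_le_sq_norm_div_of_near {θ w ŵ : ℝ} {c ĉ : ℂ} (hθw : 4 * θ ≤ w)
    (hcw : 4 * θ * w ≤ ‖c‖ ^ 2) (hw : |ŵ - w| < 3 * w / 4) (hc : ‖ĉ - c‖ < ‖c‖ / 4) :
    θ ≤ ŵ ∧ θ ≤ ‖ĉ‖ ^ 2 / ŵ := by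
  obtain ⟨hw₁, hw₂⟩ := abs_lt.mp hw
  have hw0 : 0 < w := by linarith [abs_nonneg (ŵ - w)]
  have hĉ : 3 * ‖c‖ / 4 ≤ ‖ĉ‖ := by linarith [norm_sub_norm_le c ĉ, norm_sub_rev c ĉ]
  refine ⟨by linarith, ?_⟩
  rw [le_div_iff₀ (by linarith)]
  rcases le_or_gt θ 0 with hθ | hθ
  · nlinarith [sq_nonneg ‖ĉ‖]
  · calc θ * ŵ ≤ θ * (7 * w / 4) := by gcongr; linarith
      _ ≤ 7 / 16 * ‖c‖ ^ 2 := by linarith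
      _ ≤ ‖ĉ‖ ^ 2 := by nlinarith [norm_nonneg c]

theorem measure_lamHat_lt_le_add {μ : Measure Ω} {n : ℕ} {X W : Fin n → Ω → H} {k : ℤ}
    {α θ w : ℝ} {c : ℂ} (hαθ : α ≤ θ) (hθw : 4 * θ ≤ w) (hcw : 4 * θ * w ≤ ‖c‖ ^ 2) :
    μ {ω | lamHat α n X W k ω < θ}
      ≤ μ {ω | 3 * w / 4 ≤ |wHat n W k ω - w|} + μ {ω | ‖c‖ / 4 ≤ ‖cHat n X W k ω - c‖} := by
  refine (measure_mono fun ω hω => ?_).trans (measure_union_le _ _)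
  by_contra h
  simp only [Set.mem_union, Set.mem_ofPred_eq, not_or, not_le] at h
  obtain ⟨hθŵ, hθq⟩ := le_and_le_sq_norm_div_of_near hθw hcw h.1 h.2
  rw [Set.mem_ofPred_eq, lamHat, if_pos (hαθ.trans hθŵ)] at hω
  exact hω.not_ge hθq

section Sample

variable {μ : Measure Ω} {n : ℕ} {X W : Fin n → Ω → H} {X0 W0 : Ω → H}

lemma IIDSampleXW.identDistrib (h : IIDSampleXW μ n X W X0 W0) (hX0 : Measurable X0)
    (hW0 : Measurable W0) (i : Fin n) :
    IdentDistrib (fun ω => (X i ω, W i ω)) (fun ω => (X0 ω, W0 ω)) μ μ :=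
  ⟨((h.1 i).prodMk (h.2.1 i)).aemeasurable, (hX0.prodMk hW0).aemeasurable, h.2.2.2 i⟩

variable [IsProbabilityMeasure μ]

theorem measure_le_abs_wHat_sub_le (hn : 0 < n) (hX0 : Measurable X0) (hW0 : Measurable W0)
    (h : IIDSampleXW μ n X W X0 W0) {k : ℤ} {η : ℝ} (hη : 0 ≤ η)
    (hW4 : ∫⁻ ω, ENNReal.ofReal (‖coef (W0 ω) k‖ ^ 4) ∂μ ≤ ENNReal.ofReal (η * wPop μ W0 k ^ 2))
    {t : ℝ} (ht : 0 < t) :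
    μ {ω | t ≤ |wHat n W k ω - wPop μ W0 k|}
      ≤ ENNReal.ofReal (η * wPop μ W0 k ^ 2 / (n * t ^ 2)) := by
  have := Fin.pos_iff_nonempty.1 hn
  have hdev := measure_le_abs_sampleMean_sub_le h.2.2.1 (h.identDistrib hX0 hW0)
    (f := fun p : H × H => ‖coef p.2 k‖ ^ 2) (M := η * wPop μ W0 k ^ 2) (by fun_prop)
    (by positivity)
    (by simpa only [← pow_mul] using hW4) ht
  rw [Fintype.card_fin] at hdev
  exact hdev

theorem measure_le_norm_cHat_sub_le (hn : 0 < n) (hX0 : Measurable X0) (hW0 : Measurable W0)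
    (h : IIDSampleXW μ n X W X0 W0) {k : ℤ} {η : ℝ} (hη : 0 ≤ η)
    (hXW : ∫⁻ ω, ENNReal.ofReal (‖coef (X0 ω) k‖ ^ 2 * ‖coef (W0 ω) k‖ ^ 2) ∂μ
      ≤ ENNReal.ofReal (η * xPop μ X0 k * wPop μ W0 k)) {t : ℝ} (ht : 0 < t) :
    μ {ω | t ≤ ‖cHat n X W k ω - cPop μ X0 W0 k‖}
      ≤ ENNReal.ofReal (8 * (η * xPop μ X0 k * wPop μ W0 k) / (n * t ^ 2)) := by
  have := Fin.pos_iff_nonempty.1 hn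
  have hx : 0 ≤ xPop μ X0 k := integral_nonneg fun _ => by positivity
  have hw : 0 ≤ wPop μ W0 k := integral_nonneg fun _ => by positivity
  have hdev := measure_le_norm_sampleMean_sub_le h.2.2.1 (h.identDistrib hX0 hW0)
    (g := fun p : H × H => conj (coef p.1 k) * coef p.2 k)
    (M := η * xPop μ X0 k * wPop μ W0 k) (by fun_prop) (by positivity)
    (by simpa only [norm_mul, RCLike.norm_conj, mul_pow] using hXW) ht
  rw [Fintype.card_fin] at hdev
  exact hdev

theorem measure_lamHat_lt_le (hn : 0 < n) (hX0 : Measurable X0) (hW0 : Measurable W0)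
    (h : IIDSampleXW μ n X W X0 W0) {k : ℤ} {α θ η : ℝ} (hη : 0 ≤ η) (hα : 0 < α)
    (hαθ : α ≤ θ) (hθw : 4 * θ ≤ wPop μ W0 k) (hcw : 4 * θ * wPop μ W0 k ≤ ‖cPop μ X0 W0 k‖ ^ 2)
    (hαx : 4 * α ≤ xPop μ X0 k)
    (hW4 : ∫⁻ ω, ENNReal.ofReal (‖coef (W0 ω) k‖ ^ 4) ∂μ ≤ ENNReal.ofReal (η * wPop μ W0 k ^ 2))
    (hXW : ∫⁻ ω, ENNReal.ofReal (‖coef (X0 ω) k‖ ^ 2 * ‖coef (W0 ω) k‖ ^ 2) ∂μ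
      ≤ ENNReal.ofReal (η * xPop μ X0 k * wPop μ W0 k)) :
    μ {ω | lamHat α n X W k ω < θ} ≤ ENNReal.ofReal (33 * η * xPop μ X0 k / (α * n)) := by
  set x := xPop μ X0 k
  set w := wPop μ W0 k
  set c := cPop μ X0 W0 k
  have hx : 0 < x := by linarith
  have hw : 0 < w := by linarith
  have hαc : 4 * α * w ≤ ‖c‖ ^ 2 := by nlinarith
  have hc : 0 < ‖c‖ := by nlinarith [norm_nonneg c]
  calc μ {ω | lamHat α n X W k ω < θ}
      ≤ μ {ω | 3 * w / 4 ≤ |wHat n W k ω - w|} + μ {ω | ‖c‖ / 4 ≤ ‖cHat n X W k ω - c‖} :=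
        measure_lamHat_lt_le_add hαθ hθw hcw
    _ ≤ ENNReal.ofReal (η * w ^ 2 / (n * (3 * w / 4) ^ 2))
          + ENNReal.ofReal (8 * (η * x * w) / (n * (‖c‖ / 4) ^ 2)) :=
        add_le_add (measure_le_abs_wHat_sub_le hn hX0 hW0 h hη hW4 (by positivity))
          (measure_le_norm_cHat_sub_le hn hX0 hW0 h hη hXW (by positivity))
    _ ≤ ENNReal.ofReal (η * x / (α * n)) + ENNReal.ofReal (32 * η * x / (α * n)) := by
        refine add_le_add (ENNReal.ofReal_le_ofReal ?_) (ENNReal.ofReal_le_ofReal ?_)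
        · rw [div_le_div_iff₀ (by positivity) (by positivity)]
          nlinarith [mul_le_mul_of_nonneg_left hαx (by positivity : (0 : ℝ) ≤ η * n * w ^ 2),
            (by positivity : (0 : ℝ) ≤ η * α * n * w ^ 2)]
        · rw [div_le_div_iff₀ (by positivity) (by positivity)]
          nlinarith [mul_le_mul_of_nonneg_left hαc (by positivity : (0 : ℝ) ≤ η * x * n)]
    _ = ENNReal.ofReal (33 * η * x / (α * n)) := by
        rw [← ENNReal.ofReal_add (by positivity) (by positivity)]
        ring_nf

end Sample

/-- Probability that `λ̂_k` falls below the threshold (Lemma A.2, part 2). -/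
theorem lemA2_part2 :
    ∃ C : ℝ, 0 < C ∧
      ∀ (Ω : Type) [MeasurableSpace Ω] (μ : Measure Ω) [IsProbabilityMeasure μ]
        (n : ℕ) (X W : Fin n → Ω → H) (X0 W0 : Ω → H) (η τ α ν : ℝ),
        0 < n → 0 < α → 0 ≤ ν →
        PairModel μ X0 W0 →
        IIDSampleXW μ n X W X0 W0 →
        memF μ X0 W0 8 η τ →
        ∀ k : ℤ, 4 * τ * α * γw k ^ ν ≤ lamPop μ X0 W0 k →
          μ {ω | lamHat α n X W k ω < α * γw k ^ ν} ≤
            ENNReal.ofReal (C * η / (α * n) * EnormSq μ X0 *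
              (1 + EnormSq μ W0 / (α * n))) := by
  refine ⟨33, by norm_num, ?_⟩
  intro Ω _ μ _ n X W X0 W0 η τ α ν hn hα hν hPM hIID hF k hk
  obtain ⟨hX0, hW0, hX2, hW2, -⟩ := hPM
  have hη : 0 ≤ η := zero_le_one.trans hF.1
  have hτ : 1 ≤ τ := hF.2.1
  rw [mul_assoc (4 * τ) α] at hk
  set x := xPop μ X0 k
  set w := wPop μ W0 k
  set c := cPop μ X0 W0 k
  set θ := α * γw k ^ ν
  have hαθ : α ≤ θ := le_mul_of_one_le_right hα.le (Real.one_le_rpow (one_le_γw k) hν)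
  have hθ : 0 < θ := hα.trans_le hαθ
  have hθw : 4 * θ ≤ w := four_mul_le_wPop (by linarith) hθ hk (hF.2.2.2.2 k)
  have hw : 0 < w := by linarith
  have hτcw : 4 * τ * θ * w ≤ ‖c‖ ^ 2 := (le_div_iff₀ hw).1 hk
  have hαx : 4 * α ≤ x := by
    have hτx : 4 * τ * θ ≤ x := le_of_mul_le_mul_right
      (hτcw.trans (sq_norm_cPop_le hX0 hW0 hX2 hW2 k)) hw
    nlinarith [mul_nonneg (sub_nonneg.2 hτ) hθ.le]
  obtain ⟨hW4, hXW⟩ := lintegral_fourth_moments_le_of_memF hX0 hW0 hF (by linarith) hw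
  refine (measure_lamHat_lt_le hn hX0 hW0 hIID hη hα hαθ hθw (by nlinarith) hαx
    hW4 hXW).trans (ENNReal.ofReal_le_ofReal ?_)
  have hEX := xPop_le_EnormSq hX0 hX2 k
  have hEW : 0 ≤ EnormSq μ W0 / (α * n) :=
    div_nonneg (integral_nonneg fun _ => by positivity) (by positivity)
  have hC : 0 ≤ 33 * η / (α * n) := by positivity
  calc 33 * η * x / (α * n) = 33 * η / (α * n) * x * 1 := by ring
    _ ≤ 33 * η / (α * n) * EnormSq μ X0 * (1 + EnormSq μ W0 / (α * n)) :=
        mul_le_mul (mul_le_mul_of_nonneg_left hEX hC) (by linarith) zero_le_one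
          (mul_nonneg hC (by linarith))

end FLIR
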